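/- The three-qubit T magic state admits the decomposition |T⟩^{⊗3} = (1/(2√2)) CNOT₁₂ [ |+'⟩|00⟩ + i|+⟩|11⟩ + √i|+'⟩|01⟩ + √i|+⟩|10⟩ ], where |+⟩ = |0⟩+|1⟩, |+'⟩ = |0⟩+i|1⟩, √i = e^{iπ/4}, and CNOT₁₂ is the controlled-NOT with control qubit 1 and target qubit 2. -/
import Mathlib


/-- The T gate magic state `|T⟩ = (|0⟩ + e^{iπ/4}|1⟩)/√2`. -/
noncomputable def ketT : Fin 2 → ℂ :=
  ![(Real.sqrt 2 : ℂ)⁻¹, Complex.exp (Real.pi * Complex.I / 4) * (Real.sqrt 2 : ℂ)⁻¹]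

/-- `|T⟩^{⊗3}`. -/
noncomputable def T3 : (Fin 3 → Fin 2) → ℂ :=
  fun y => ketT (y 0) * ketT (y 1) * ketT (y 2)

/-- CNOT on 3 qubits, control `i`, target `j`. -/
def cnot3 (i j : Fin 3) (ψ : (Fin 3 → Fin 2) → ℂ) : (Fin 3 → Fin 2) → ℂ :=
  fun y => ψ (Function.update y j (y j + y i))

/-- `|+⟩ = |0⟩ + |1⟩` (unnormalized). -/
noncomputable def plusv : Fin 2 → ℂ := ![1, 1]

/-- `|+'⟩ = |0⟩ + i|1⟩` (unnormalized). -/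
noncomputable def plusv' : Fin 2 → ℂ := ![1, Complex.I]

/-- `|+'⟩|00⟩ + i|+⟩|11⟩ + √i|+'⟩|01⟩ + √i|+⟩|10⟩`. -/
noncomputable def rhs3 : (Fin 3 → Fin 2) → ℂ := fun y =>
  plusv' (y 0) * (if y 1 = 0 ∧ y 2 = 0 then 1 else 0)
  + Complex.I * plusv (y 0) * (if y 1 = 1 ∧ y 2 = 1 then 1 else 0)
  + Complex.exp (Real.pi * Complex.I / 4) * plusv' (y 0) *
      (if y 1 = 0 ∧ y 2 = 1 then 1 else 0)
  + Complex.exp (Real.pi * Complex.I / 4) * plusv (y 0) *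
      (if y 1 = 1 ∧ y 2 = 0 then 1 else 0)

lemma E_sq : Complex.exp (Real.pi * Complex.I / 4) * Complex.exp (Real.pi * Complex.I / 4)
    = Complex.I := by
  rw [← Complex.exp_add]
  have h : (Real.pi : ℂ) * Complex.I / 4 + Real.pi * Complex.I / 4
      = (Real.pi / 2 : ℝ) * Complex.I := by push_cast; ring
  rw [h, Complex.exp_mul_I]
  simp

lemma s3 : ((Real.sqrt 2 : ℂ))⁻¹ * (Real.sqrt 2 : ℂ)⁻¹ * (Real.sqrt 2 : ℂ)⁻¹
    = ((2 * Real.sqrt 2 : ℝ) : ℂ)⁻¹ := by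
  have h : (Real.sqrt 2 : ℂ) * (Real.sqrt 2 : ℂ) = 2 := by
    exact_mod_cast congrArg (Complex.ofReal) (Real.mul_self_sqrt (by norm_num : (0:ℝ) ≤ 2))
  have hne : (Real.sqrt 2 : ℂ) ≠ 0 := by
    exact_mod_cast Real.sqrt_ne_zero'.mpr (by norm_num)
  push_cast
  field_simp
  linear_combination (-1 : ℂ) * h

lemma key (a b c : Fin 2) :
    T3 ![a, b, c] = ((2 * Real.sqrt 2 : ℝ) : ℂ)⁻¹ • cnot3 0 1 rhs3 ![a, b, c] := by
  fin_cases a <;> fin_cases b <;> fin_cases c <;>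
    · simp (config := { decide := true }) only [T3, cnot3, rhs3, ketT, plusv, plusv',
        Pi.smul_apply, smul_eq_mul, Function.update, Matrix.cons_val_zero, Matrix.cons_val_one,
        Matrix.head_cons, Matrix.cons_val_two, Matrix.tail_cons, if_true, if_false,
        add_zero, zero_add, mul_one, mul_zero, one_mul]
      generalize hE : Complex.exp (Real.pi * Complex.I / 4) = E
      have h2 : E ^ 2 = Complex.I := by rw [← hE, sq]; exact E_sq
      have h3 : E ^ 3 = Complex.I * E := by rw [pow_succ, h2]
      rw [← s3]
      ring_nf
      try simp [h2, h3]
      try ring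
      try simp [h2, h3, mul_comm, mul_assoc, mul_left_comm]

/-- `|T⟩^{⊗3} = (1/(2√2)) CNOT₁₂ [ |+'⟩|00⟩ + i|+⟩|11⟩ + √i|+'⟩|01⟩ + √i|+⟩|10⟩ ]`. -/
theorem T3_cnot_decomposition :
    T3 = ((2 * Real.sqrt 2 : ℝ) : ℂ)⁻¹ • cnot3 0 1 rhs3 := by
  funext y
  have hy : y = ![y 0, y 1, y 2] := by ext i; fin_cases i <;> rfl
  rw [hy, key]
  rw [← hy]
  rfl
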